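/- Let r ≥ 2 be an even integer, k ≥ r an integer and p ≥ r a real number. Let G be the complete regular k-partite r-graph with k parts each of size t ≥ 1. Then λ_min^(p)(G) = t^{r−r/p} · λ_min^(p)(K_k^r). -/

import Mathlib

open Finset

/-- Polynomial form of a weighted `r`-graph with edge set `E` and weights `w`:
`P(x) = r! * ∑_{e ∈ E} w(e) * ∏_{i ∈ e} x i`. -/
noncomputable def polyForm (r : ℕ) {V : Type*} (E : Finset (Finset V))
    (w : Finset V → ℝ) (x : V → ℝ) : ℝ :=
  (r.factorial : ℝ) * ∑ e ∈ E, w e * ∏ i ∈ e, x i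

/-- The ℓ^p norm of a vector. -/
noncomputable def lpNorm (p : ℝ) {V : Type*} [Fintype V] (x : V → ℝ) : ℝ :=
  (∑ i, |x i| ^ p) ^ (1 / p)

/-- `λ^(p)(G_w)`: the maximum of the polynomial form over the unit ℓ^p sphere. -/
noncomputable def lamMax (r : ℕ) (p : ℝ) {V : Type*} [Fintype V]
    (E : Finset (Finset V)) (w : Finset V → ℝ) : ℝ :=
  sSup {t | ∃ x : V → ℝ, lpNorm p x = 1 ∧ polyForm r E w x = t}

/-- `λ_min^(p)(G_w)`: the minimum of the polynomial form over the unit ℓ^p sphere. -/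
noncomputable def lamMin (r : ℕ) (p : ℝ) {V : Type*} [Fintype V]
    (E : Finset (Finset V)) (w : Finset V → ℝ) : ℝ :=
  sInf {t | ∃ x : V → ℝ, lpNorm p x = 1 ∧ polyForm r E w x = t}

/-- Edge set of the complete `r`-graph `K_k^r` on vertex set `Fin k`. -/
def completeEdges (r k : ℕ) : Finset (Finset (Fin k)) :=
  Finset.univ.powersetCard r

/-- Edge set of the complete regular `k`-partite `r`-graph with parts of size `t`:
vertices are `Fin k × Fin t` (the parts are the fibers of `Prod.fst`), and edges are
all `r`-element vertex sets containing at most one vertex from each part. -/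
def multiEdges (r k t : ℕ) : Finset (Finset (Fin k × Fin t)) :=
  (Finset.univ.powersetCard r).filter (fun e => (e.image Prod.fst).card = r)

/-! At `y`, the polynomial form of the multipartite graph equals that of `K_k^r` at the vector
`s` of part sums `s i = ∑ j, y (i, j)`, because each multipartite edge is a transversal of an
`r`-set of parts. The power-mean inequality gives `‖s‖_p ≤ t^(1-1/p) ‖y‖_p`, so `r`-homogeneity
and `λ_min(K_k^r) ≤ 0` give `λ_min(G) ≥ t^(r-r/p) λ_min(K_k^r)`. Conversely, spreading a unit
vector `x` evenly over the parts, `y (i, j) = t^(-1/p) x i`, yields a unit vector with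
`P_G(y) = t^(r-r/p) P_K(x)`. -/

section LpNorm

variable {V : Type*} [Fintype V] {p : ℝ}

lemma lpNorm_nonneg (x : V → ℝ) : 0 ≤ lpNorm p x :=
  Real.rpow_nonneg (sum_nonneg fun _ _ => Real.rpow_nonneg (abs_nonneg _) _) _

lemma lpNorm_rpow (hp : p ≠ 0) (x : V → ℝ) : lpNorm p x ^ p = ∑ i, |x i| ^ p := by
  rw [lpNorm, ← Real.rpow_mul (sum_nonneg fun _ _ => Real.rpow_nonneg (abs_nonneg _) _),
    one_div_mul_cancel hp, Real.rpow_one]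

lemma lpNorm_eq_one_iff (hp : p ≠ 0) {x : V → ℝ} : lpNorm p x = 1 ↔ ∑ i, |x i| ^ p = 1 := by
  refine ⟨fun hx => by rw [← lpNorm_rpow hp, hx, Real.one_rpow], fun hx => ?_⟩
  rw [lpNorm, hx, Real.one_rpow]

lemma abs_le_one_of_lpNorm_eq_one (hp : 0 < p) {x : V → ℝ} (hx : lpNorm p x = 1) (i : V) :
    |x i| ≤ 1 := by
  by_contra! h
  have hle : |x i| ^ p ≤ ∑ j, |x j| ^ p :=
    single_le_sum (fun j _ => Real.rpow_nonneg (abs_nonneg (x j)) p) (mem_univ i)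
  rw [(lpNorm_eq_one_iff hp.ne').1 hx] at hle
  exact (Real.one_lt_rpow h hp).not_ge hle

lemma eq_zero_of_lpNorm_eq_zero (hp : 0 < p) {x : V → ℝ} (hx : lpNorm p x = 0) : x = 0 := by
  have hsum : ∑ i, |x i| ^ p = 0 := by rw [← lpNorm_rpow hp.ne', hx, Real.zero_rpow hp.ne']
  funext i
  have hi := (sum_eq_zero_iff_of_nonneg fun j _ => Real.rpow_nonneg (abs_nonneg (x j)) p).1
    hsum i (mem_univ i)
  simpa [Real.rpow_eq_zero (abs_nonneg _) hp.ne'] using hi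

lemma lpNorm_smul (hp : 0 < p) (c : ℝ) (x : V → ℝ) : lpNorm p (c • x) = |c| * lpNorm p x := by
  simp only [lpNorm, Pi.smul_apply, smul_eq_mul, abs_mul,
    Real.mul_rpow (abs_nonneg c) (abs_nonneg _), ← mul_sum]
  rw [Real.mul_rpow (Real.rpow_nonneg (abs_nonneg c) _)
      (sum_nonneg fun _ _ => Real.rpow_nonneg (abs_nonneg _) _),
    ← Real.rpow_mul (abs_nonneg c), mul_one_div_cancel hp.ne', Real.rpow_one]

variable {κ : Type*} [Fintype κ]

lemma lpNorm_comp_fst (x : V → ℝ) :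
    lpNorm p (fun v : V × κ => x v.1) = (Fintype.card κ : ℝ) ^ (1 / p) * lpNorm p x := by
  simp only [lpNorm, Fintype.sum_prod_type, sum_const, card_univ, nsmul_eq_mul, ← mul_sum]
  exact Real.mul_rpow (Nat.cast_nonneg _) (sum_nonneg fun _ _ => Real.rpow_nonneg (abs_nonneg _) _)

lemma lpNorm_sum_snd_le (hp : 1 ≤ p) (y : V × κ → ℝ) :
    lpNorm p (fun i => ∑ j, y (i, j)) ≤ (Fintype.card κ : ℝ) ^ (1 - 1 / p) * lpNorm p y := by
  have hp0 : 0 < p := zero_lt_one.trans_le hp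
  rw [← Real.rpow_le_rpow_iff (lpNorm_nonneg _)
    (mul_nonneg (Real.rpow_nonneg (Nat.cast_nonneg _) _) (lpNorm_nonneg _)) hp0,
    Real.mul_rpow (Real.rpow_nonneg (Nat.cast_nonneg _) _) (lpNorm_nonneg _),
    ← Real.rpow_mul (Nat.cast_nonneg _), lpNorm_rpow hp0.ne', lpNorm_rpow hp0.ne',
    Fintype.sum_prod_type, mul_sum, sub_mul, one_div_mul_cancel hp0.ne', one_mul]
  gcongr with i
  calc |∑ j, y (i, j)| ^ p ≤ (∑ j, |y (i, j)|) ^ p :=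
        Real.rpow_le_rpow (abs_nonneg _) (abs_sum_le_sum_abs _ _) hp0.le
    _ ≤ (Fintype.card κ : ℝ) ^ (p - 1) * ∑ j, |y (i, j)| ^ p :=
        Real.rpow_sum_le_const_mul_sum_rpow univ (fun j => y (i, j)) hp

end LpNorm

section PolyForm

variable {V : Type*} {r : ℕ} {p : ℝ} {E : Finset (Finset V)} {w : Finset V → ℝ}

lemma polyForm_smul (hE : ∀ e ∈ E, e.card = r) (c : ℝ) (x : V → ℝ) :
    polyForm r E w (c • x) = c ^ r * polyForm r E w x := by
  have hsum : ∑ e ∈ E, w e * ∏ i ∈ e, (c • x) i = c ^ r * ∑ e ∈ E, w e * ∏ i ∈ e, x i := by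
    rw [mul_sum]
    refine sum_congr rfl fun e he => ?_
    simp only [Pi.smul_apply, smul_eq_mul, prod_mul_distrib, prod_const, hE e he]
    ring
  rw [polyForm, polyForm, hsum, mul_left_comm]

lemma polyForm_pi_single [DecidableEq V] (hr : 2 ≤ r) (hE : ∀ e ∈ E, e.card = r) (i : V)
    (a : ℝ) : polyForm r E w (Pi.single i a) = 0 := by
  refine mul_eq_zero_of_right _ (sum_eq_zero fun e he => mul_eq_zero_of_right _ ?_)
  obtain ⟨j, hj, hji⟩ := exists_mem_ne (by rw [hE e he]; omega) i
  exact prod_eq_zero hj (by simp [hji])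

lemma abs_polyForm_le {x : V → ℝ} (hx : ∀ i, |x i| ≤ 1) :
    |polyForm r E w x| ≤ r.factorial * ∑ e ∈ E, |w e| := by
  rw [polyForm, abs_mul, Nat.abs_cast]
  gcongr
  refine (abs_sum_le_sum_abs _ _).trans (sum_le_sum fun e _ => ?_)
  rw [abs_mul, abs_prod]
  exact mul_le_of_le_one_right (abs_nonneg _)
    (prod_le_one (fun i _ => abs_nonneg _) fun i _ => hx i)

variable [Fintype V]

lemma lamMin_le_polyForm (hp : 0 < p) {x : V → ℝ} (hx : lpNorm p x = 1) :
    lamMin r p E w ≤ polyForm r E w x := by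
  refine csInf_le ⟨-(r.factorial * ∑ e ∈ E, |w e|), ?_⟩ ⟨x, hx, rfl⟩
  rintro _ ⟨z, hz, rfl⟩
  exact neg_le_of_abs_le (abs_polyForm_le (abs_le_one_of_lpNorm_eq_one hp hz))

-- The hypothesis `a ≤ 0` accounts for the junk value `sInf ∅ = 0`.
lemma le_lamMin {a : ℝ} (ha : a ≤ 0) (h : ∀ x : V → ℝ, lpNorm p x = 1 → a ≤ polyForm r E w x) :
    a ≤ lamMin r p E w :=
  Real.le_sInf (by rintro _ ⟨x, hx, rfl⟩; exact h x hx) ha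

lemma lamMin_nonpos (hp : p ≠ 0) (hr : 2 ≤ r) (hE : ∀ e ∈ E, e.card = r) :
    lamMin r p E w ≤ 0 := by
  classical
  cases isEmpty_or_nonempty V with
  | inl hV =>
    refine Real.sInf_nonpos ?_
    rintro _ ⟨x, hx, -⟩
    simp only [lpNorm, univ_eq_empty, sum_empty, Real.zero_rpow (one_div_ne_zero hp)] at hx
    exact absurd hx zero_ne_one
  | inr hV =>
    obtain ⟨i⟩ := hV
    refine Real.sInf_nonpos' ⟨0, ⟨Pi.single i 1, ?_, polyForm_pi_single hr hE i 1⟩, le_rfl⟩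
    rw [lpNorm_eq_one_iff hp, Fintype.sum_eq_single i fun j hj => by
      simp [Pi.single_eq_of_ne hj, Real.zero_rpow hp]]
    simp

lemma pow_lpNorm_mul_lamMin_le (hp : 0 < p) (hr : r ≠ 0) (hE : ∀ e ∈ E, e.card = r)
    (x : V → ℝ) : lpNorm p x ^ r * lamMin r p E w ≤ polyForm r E w x := by
  set N := lpNorm p x
  rcases (lpNorm_nonneg x).eq_or_lt with hN | hN
  · obtain rfl : x = 0 := eq_zero_of_lpNorm_eq_zero hp hN.symm
    rw [show N = 0 from hN.symm, ← zero_smul ℝ (0 : V → ℝ), polyForm_smul hE, zero_pow hr,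
      zero_mul, zero_mul]
  · have hunit : lpNorm p (N⁻¹ • x) = 1 := by
      rw [lpNorm_smul hp, abs_of_pos (inv_pos.2 hN), inv_mul_cancel₀ hN.ne']
    calc N ^ r * lamMin r p E w ≤ N ^ r * (N⁻¹ ^ r * polyForm r E w x) := by
          rw [← polyForm_smul hE]
          exact mul_le_mul_of_nonneg_left (lamMin_le_polyForm hp hunit) (by positivity)
      _ = polyForm r E w x := by
          rw [← mul_assoc, ← mul_pow, mul_inv_cancel₀ hN.ne', one_pow, one_mul]

end PolyForm

section Transversal

variable {α β : Type*}

def transversal (S : Finset α) (f : S → β) : Finset (α × β) :=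
  univ.map ⟨fun i => (i.1, f i), fun _ _ h => Subtype.ext (congrArg Prod.fst h)⟩

lemma mem_transversal {S : Finset α} {f : S → β} {v : α × β} :
    v ∈ transversal S f ↔ ∃ i : S, (i.1, f i) = v := by
  simp only [transversal, mem_map, mem_univ, true_and]
  rfl

lemma card_transversal (S : Finset α) (f : S → β) : (transversal S f).card = S.card := by
  simp [transversal]

lemma image_fst_transversal [DecidableEq α] (S : Finset α) (f : S → β) :
    (transversal S f).image Prod.fst = S := by
  ext a
  simp only [transversal, mem_image, mem_map, mem_univ, true_and]
  constructor
  · rintro ⟨_, ⟨i, rfl⟩, rfl⟩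
    exact i.2
  · exact fun ha => ⟨_, ⟨⟨a, ha⟩, rfl⟩, rfl⟩

lemma prod_transversal {M : Type*} [CommMonoid M] (S : Finset α) (f : S → β) (y : α × β → M) :
    ∏ v ∈ transversal S f, y v = ∏ i : S, y (i.1, f i) :=
  prod_map _ _ _

lemma transversal_inj [DecidableEq α] {S₁ S₂ : Finset α} {f₁ : S₁ → β} {f₂ : S₂ → β}
    (h : transversal S₁ f₁ = transversal S₂ f₂) :
    (⟨S₁, f₁⟩ : Σ S : Finset α, S → β) = ⟨S₂, f₂⟩ := by
  obtain rfl : S₁ = S₂ := by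
    rw [← image_fst_transversal S₁ f₁, ← image_fst_transversal S₂ f₂, h]
  suffices f₁ = f₂ by rw [this]
  funext i
  obtain ⟨j, hj⟩ := mem_transversal.1 (h ▸ mem_transversal.2 ⟨i, rfl⟩ : (i.1, f₁ i) ∈ _)
  obtain rfl : j = i := Subtype.ext (congrArg Prod.fst hj)
  exact (congrArg Prod.snd hj).symm

lemma exists_transversal_eq [DecidableEq α] {e : Finset (α × β)}
    (he : Set.InjOn Prod.fst (e : Set (α × β))) :
    ∃ f : e.image Prod.fst → β, transversal (e.image Prod.fst) f = e := by
  have hpart (i : e.image Prod.fst) : ∃ v ∈ e, v.1 = i := mem_image.1 i.2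
  choose v hve hvi using hpart
  refine ⟨fun i => (v i).2, ext fun w => mem_transversal.trans ⟨?_, fun hw => ?_⟩⟩
  · rintro ⟨i, rfl⟩
    simpa [← hvi i] using hve i
  · let i : e.image Prod.fst := ⟨w.1, mem_image_of_mem _ hw⟩
    refine ⟨i, ?_⟩
    rw [← he (hve i) hw (hvi i), ← hvi i]

end Transversal

section Multipartite

variable {r k t : ℕ} {p : ℝ}

lemma sum_prod_multiEdges (y : Fin k × Fin t → ℝ) :
    ∑ e ∈ multiEdges r k t, ∏ v ∈ e, y v =
      ∑ S ∈ completeEdges r k, ∏ i ∈ S, ∑ j, y (i, j) := by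
  have hexpand (S : Finset (Fin k)) :
      ∏ i ∈ S, ∑ j, y (i, j) = ∑ f : S → Fin t, ∏ v ∈ transversal S f, y v := by
    simp only [← prod_coe_sort S, Fintype.prod_sum, prod_transversal]
  simp only [hexpand]
  rw [sum_sigma']
  symm
  refine sum_bij (fun x _ => transversal x.1 x.2) ?_ (fun _ _ _ _ h => transversal_inj h) ?_
    (fun _ _ => rfl)
  · rintro ⟨S, f⟩ hS
    simp only [mem_sigma, completeEdges, mem_powersetCard] at hS
    simp [multiEdges, card_transversal, image_fst_transversal, hS.1.2]
  · intro e he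
    simp only [multiEdges, mem_filter, mem_powersetCard] at he
    obtain ⟨f, hf⟩ := exists_transversal_eq (injOn_of_card_image_eq (by rw [he.2, he.1.2]))
    exact ⟨⟨e.image Prod.fst, f⟩, by simpa [completeEdges] using he.2, hf⟩

lemma card_of_mem_completeEdges {e : Finset (Fin k)} (he : e ∈ completeEdges r k) :
    e.card = r :=
  (mem_powersetCard.1 he).2

lemma card_of_mem_multiEdges {e : Finset (Fin k × Fin t)} (he : e ∈ multiEdges r k t) :
    e.card = r :=
  (mem_powersetCard.1 (mem_filter.1 he).1).2

lemma polyForm_multiEdges (y : Fin k × Fin t → ℝ) :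
    polyForm r (multiEdges r k t) (fun _ => 1) y =
      polyForm r (completeEdges r k) (fun _ => 1) (fun i => ∑ j, y (i, j)) := by
  simp only [polyForm, one_mul, sum_prod_multiEdges]

lemma polyForm_multiEdges_comp_fst (x : Fin k → ℝ) :
    polyForm r (multiEdges r k t) (fun _ => 1) (fun v => x v.1) =
      (t : ℝ) ^ r * polyForm r (completeEdges r k) (fun _ => 1) x := by
  rw [polyForm_multiEdges, ← polyForm_smul fun _ => card_of_mem_completeEdges]
  congr 1
  funext i
  simp

lemma lamMin_multiEdges_le (hp : 0 < p) (hr : 2 ≤ r) (ht : 0 < t) :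
    lamMin r p (multiEdges r k t) (fun _ => 1) ≤
      ((t : ℝ) ^ (1 - 1 / p)) ^ r * lamMin r p (completeEdges r k) (fun _ => 1) := by
  have ht0 : (0 : ℝ) < t := by exact_mod_cast ht
  rw [← div_le_iff₀' (by positivity)]
  refine le_lamMin (div_nonpos_of_nonpos_of_nonneg
    (lamMin_nonpos hp.ne' hr fun _ => card_of_mem_multiEdges) (by positivity)) fun x hx => ?_
  rw [div_le_iff₀' (by positivity)]
  set y : Fin k × Fin t → ℝ := ((t : ℝ) ^ (1 / p))⁻¹ • fun v => x v.1
  have hy : lpNorm p y = 1 := by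
    rw [lpNorm_smul hp, lpNorm_comp_fst, hx, Fintype.card_fin, mul_one,
      abs_of_pos (by positivity), inv_mul_cancel₀ (by positivity)]
  calc lamMin r p (multiEdges r k t) (fun _ => 1)
      ≤ polyForm r (multiEdges r k t) (fun _ => 1) y := lamMin_le_polyForm hp hy
    _ = (((t : ℝ) ^ (1 / p))⁻¹ * t) ^ r * polyForm r (completeEdges r k) (fun _ => 1) x := by
      rw [polyForm_smul fun _ => card_of_mem_multiEdges, polyForm_multiEdges_comp_fst, mul_pow,
        mul_assoc]
    _ = ((t : ℝ) ^ (1 - 1 / p)) ^ r * polyForm r (completeEdges r k) (fun _ => 1) x := by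
      rw [Real.rpow_sub ht0, Real.rpow_one, inv_mul_eq_div]

lemma le_lamMin_multiEdges (hp : 1 ≤ p) (hr : 2 ≤ r) :
    ((t : ℝ) ^ (1 - 1 / p)) ^ r * lamMin r p (completeEdges r k) (fun _ => 1) ≤
      lamMin r p (multiEdges r k t) (fun _ => 1) := by
  have hp0 : 0 < p := zero_lt_one.trans_le hp
  have hK : lamMin r p (completeEdges r k) (fun _ => 1) ≤ 0 :=
    lamMin_nonpos hp0.ne' hr fun _ => card_of_mem_completeEdges
  refine le_lamMin (mul_nonpos_of_nonneg_of_nonpos (by positivity) hK) fun y hy => ?_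
  set s : Fin k → ℝ := fun i => ∑ j, y (i, j)
  have hs : lpNorm p s ≤ (t : ℝ) ^ (1 - 1 / p) := by
    simpa [hy] using lpNorm_sum_snd_le hp y
  calc ((t : ℝ) ^ (1 - 1 / p)) ^ r * lamMin r p (completeEdges r k) (fun _ => 1)
      ≤ lpNorm p s ^ r * lamMin r p (completeEdges r k) (fun _ => 1) :=
        mul_le_mul_of_nonpos_right (pow_le_pow_left₀ (lpNorm_nonneg _) hs r) hK
    _ ≤ polyForm r (completeEdges r k) (fun _ => 1) s :=
        pow_lpNorm_mul_lamMin_le hp0 (by omega) (fun _ => card_of_mem_completeEdges) s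
    _ = polyForm r (multiEdges r k t) (fun _ => 1) y := (polyForm_multiEdges y).symm

end Multipartite

theorem lamMin_multipartite_general (r k t : ℕ) (p : ℝ)
    (hr2 : 2 ≤ r) (hp : (r : ℝ) ≤ p) (ht : 1 ≤ t) :
    lamMin r p (multiEdges r k t) (fun _ => 1) =
      (t : ℝ) ^ ((r : ℝ) - (r : ℝ) / p) *
        lamMin r p (completeEdges r k) (fun _ => 1) := by
  have hp1 : 1 ≤ p := le_trans (by exact_mod_cast (by omega : 1 ≤ r)) hp
  have hexp : (t : ℝ) ^ ((r : ℝ) - r / p) = ((t : ℝ) ^ (1 - 1 / p)) ^ r := by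
    rw [← Real.rpow_natCast, ← Real.rpow_mul (Nat.cast_nonneg t)]
    ring_nf
  rw [hexp]
  exact le_antisymm (lamMin_multiEdges_le (zero_lt_one.trans_le hp1) hr2 ht)
    (le_lamMin_multiEdges hp1 hr2)

/-- Equation (10) of the paper: for `r ≥ 2` even, `k ≥ r`, `p ≥ r`, and the complete
regular `k`-partite `r`-graph `G` with parts of size `t ≥ 1`:
`λ_min^(p)(G) = t^{r - r/p} · λ_min^(p)(K_k^r)`. -/
theorem lamMin_multipartite (r k t : ℕ) (p : ℝ)
    (hr2 : 2 ≤ r) (hre : Even r) (hkr : r ≤ k) (hp : (r : ℝ) ≤ p) (ht : 1 ≤ t) :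
    lamMin r p (multiEdges r k t) (fun _ => 1) =
      (t : ℝ) ^ ((r : ℝ) - (r : ℝ) / p) *
        lamMin r p (completeEdges r k) (fun _ => 1) :=
  lamMin_multipartite_general r k t p hr2 hp ht
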